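/- arXiv:0801.2392 — 2 statements merged into one kernel-verified Lean document; each statement's English description precedes it below -/
import Mathlib

section
/- Let (X,+) be a group on the countably infinite set X. For a subgroup H of X, let C_H be the set of all finitary operations on X that are either projections or, up to fictitious variables, of the form x ↦ a + x_k for some a ∈ H and coordinate k (i.e., all n-ary operations (x_1,…,x_n) ↦ a + x_k with a ∈ H, together with all projections). Then each C_H is a local clone, the unary operations of C_H are exactly the translations x ↦ a + x with a ∈ H, and the map H ↦ C_H from the subgroup lattice of X into the lattice Cll(X) of local clones is injective, order-preserving, and preserves arbitrary meets and joins. -/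
/-- A finitary operation on `X`: an `(n+1)`-ary function `X^(n+1) → X` (arities are ≥ 1). -/
abbrev FinOp (X : Type) := Σ n : ℕ, (Fin (n + 1) → X) → X

/-- A finitary relation on `X`: an `(m+1)`-ary relation `ρ ⊆ X^(m+1)` (arities are ≥ 1). -/
abbrev FinRel (X : Type) := Σ m : ℕ, Set (Fin (m + 1) → X)

variable {X : Type}

/-- `C` is a clone: it contains all projections and is closed under composition. -/
def IsClone (C : Set (FinOp X)) : Prop :=
  (∀ (n : ℕ) (k : Fin (n + 1)), (⟨n, fun x => x k⟩ : FinOp X) ∈ C) ∧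
  (∀ (n m : ℕ) (f : (Fin (n + 1) → X) → X) (g : Fin (n + 1) → (Fin (m + 1) → X) → X),
    (⟨n, f⟩ : FinOp X) ∈ C → (∀ i, (⟨m, g i⟩ : FinOp X) ∈ C) →
    (⟨m, fun x => f fun i => g i x⟩ : FinOp X) ∈ C)

/-- `C` is a local clone: a clone each of whose `n`-ary fragments is closed in the
product topology on `X^(X^n)`, where `X` carries the discrete topology. -/
def IsLocalClone (C : Set (FinOp X)) : Prop :=
  IsClone C ∧
  ∀ n : ℕ,
    letI : TopologicalSpace X := ⊥
    IsClosed {f : (Fin (n + 1) → X) → X | (⟨n, f⟩ : FinOp X) ∈ C}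

/-- The smallest local clone containing `F` (the local clone generated by `F`). -/
def cllClosure (F : Set (FinOp X)) : Set (FinOp X) :=
  ⋂₀ {C : Set (FinOp X) | IsLocalClone C ∧ F ⊆ C}

/-- `f` preserves the relation `ρ`. -/
def Preserves {n m : ℕ} (f : (Fin (n + 1) → X) → X) (ρ : Set (Fin (m + 1) → X)) : Prop :=
  ∀ r : Fin (n + 1) → Fin (m + 1) → X, (∀ i, r i ∈ ρ) → (fun j => f fun i => r i j) ∈ ρ

/-- `Pol R`: all finitary operations preserving every relation in `R`. -/
def Polymorphisms (R : Set (FinRel X)) : Set (FinOp X) :=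
  {f | ∀ ρ ∈ R, Preserves f.2 ρ.2}

/-- `Inv F`: all finitary relations invariant under every operation in `F`. -/
def Invariants (F : Set (FinOp X)) : Set (FinRel X) :=
  {ρ | ∀ f ∈ F, Preserves f.2 ρ.2}

/-- The clone of projections. -/
def projClone (X : Type) : Set (FinOp X) :=
  {f | ∃ k : Fin (f.1 + 1), f.2 = fun x => x k}

/-- For a subgroup `H` of the group `(X, +)`, the set of all finitary operations on `X`
which are projections or, up to fictitious variables, translations `x ↦ a + x_k` by
elements `a ∈ H`. -/
def transClone {X : Type} [AddGroup X] (H : AddSubgroup X) : Set (FinOp X) :=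
  {f | (∃ k : Fin (f.1 + 1), f.2 = fun x => x k) ∨
       (∃ a ∈ H, ∃ k : Fin (f.1 + 1), f.2 = fun x => a + x k)}

/-!
Every member of `C_H` is a translation `x ↦ a + x_k` (a projection being the translation by `0`),
and `a` is its value at the point `0`. So `C_H` is cut out by the clopen condition `f 0 ∈ H` and
the closed conditions `f x = f 0 + x_k`, hence local, and `H` is recovered from `C_H`, which also
gives the meets. For joins: the unary translations in a clone are closed under addition, so the
local clone generated by the `C_H`, `H ∈ S`, contains the translations by all of `⨆ S`, and
composing them with projections yields `C_{⨆ S}`.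
-/

section Clone

variable {C : Set (FinOp X)}

theorem IsClone.translation_add_mem [AddSemigroup X] (hC : IsClone C) {a b : X}
    (ha : (⟨0, fun x => a + x 0⟩ : FinOp X) ∈ C) (hb : (⟨0, fun x => b + x 0⟩ : FinOp X) ∈ C) :
    (⟨0, fun x => a + b + x 0⟩ : FinOp X) ∈ C := by
  simpa only [add_assoc] using hC.2 0 0 _ (fun _ => _) ha fun _ => hb

theorem IsClone.translation_mem [Add X] (hC : IsClone C) {a : X}
    (ha : (⟨0, fun x => a + x 0⟩ : FinOp X) ∈ C) (n : ℕ) (k : Fin (n + 1)) :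
    (⟨n, fun x => a + x k⟩ : FinOp X) ∈ C :=
  hC.2 0 n _ (fun _ => _) ha fun _ => hC.1 n k

theorem isLocalClone_cllClosure (F : Set (FinOp X)) : IsLocalClone (cllClosure F) := by
  refine ⟨⟨fun n k C hC => hC.1.1.1 n k, fun n m f g hf hg C hC =>
    hC.1.1.2 n m f g (hf C hC) fun i => hg i C hC⟩, fun n => ?_⟩
  let : TopologicalSpace X := ⊥
  have hfrag : {f : (Fin (n + 1) → X) → X | (⟨n, f⟩ : FinOp X) ∈ cllClosure F} =
      ⋂ C ∈ {C : Set (FinOp X) | IsLocalClone C ∧ F ⊆ C},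
        {f : (Fin (n + 1) → X) → X | (⟨n, f⟩ : FinOp X) ∈ C} := by
    ext f
    simp [cllClosure]
  rw [hfrag]
  exact isClosed_biInter fun C hC => hC.1.2 n

theorem subset_cllClosure (F : Set (FinOp X)) : F ⊆ cllClosure F :=
  fun _ hf _ hC => hC.2 hf

theorem cllClosure_subset {F : Set (FinOp X)} (hC : IsLocalClone C) (hF : F ⊆ C) :
    cllClosure F ⊆ C :=
  Set.sInter_subset_of_mem ⟨hC, hF⟩

end Clone

section TransClone

variable [AddGroup X] {H : AddSubgroup X}

theorem mem_transClone_iff {n : ℕ} {f : (Fin (n + 1) → X) → X} :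
    (⟨n, f⟩ : FinOp X) ∈ transClone H ↔ ∃ a ∈ H, ∃ k : Fin (n + 1), f = fun x => a + x k := by
  refine ⟨?_, fun h => Or.inr h⟩
  rintro (⟨k, hk⟩ | h)
  · exact ⟨0, H.zero_mem, k, by simpa only [zero_add] using hk⟩
  · exact h

theorem mem_transClone_iff_apply_zero {n : ℕ} {f : (Fin (n + 1) → X) → X} :
    (⟨n, f⟩ : FinOp X) ∈ transClone H ↔ f 0 ∈ H ∧ ∃ k : Fin (n + 1), ∀ x, f x = f 0 + x k := by
  rw [mem_transClone_iff]
  constructor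
  · rintro ⟨a, ha, k, rfl⟩
    exact ⟨by simpa using ha, k, fun x => by simp⟩
  · rintro ⟨h0, k, hk⟩
    exact ⟨f 0, h0, k, funext hk⟩

theorem translation_mem_transClone_iff {a : X} {n : ℕ} (k : Fin (n + 1)) :
    (⟨n, fun x => a + x k⟩ : FinOp X) ∈ transClone H ↔ a ∈ H :=
  ⟨fun h => by simpa using (mem_transClone_iff_apply_zero.1 h).1,
    fun ha => mem_transClone_iff.2 ⟨a, ha, k, rfl⟩⟩

theorem transClone_mono : Monotone (transClone (X := X)) := by
  rintro H K hHK ⟨n, f⟩ hf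
  obtain ⟨a, ha, k, rfl⟩ := mem_transClone_iff.1 hf
  exact mem_transClone_iff.2 ⟨a, hHK ha, k, rfl⟩

theorem transClone_injective : Function.Injective (transClone (X := X)) := by
  intro H K h
  ext a
  rw [← translation_mem_transClone_iff (0 : Fin 1), h, translation_mem_transClone_iff]

theorem isClone_transClone (H : AddSubgroup X) : IsClone (transClone H) := by
  refine ⟨fun n k => Or.inl ⟨k, rfl⟩, fun n m f g hf hg => ?_⟩
  obtain ⟨a, ha, k, rfl⟩ := mem_transClone_iff.1 hf
  obtain ⟨b, hb, j, hj⟩ := mem_transClone_iff.1 (hg k)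
  exact mem_transClone_iff.2 ⟨a + b, H.add_mem ha hb, j, by simp only [hj, add_assoc]⟩

theorem isLocalClone_transClone (H : AddSubgroup X) : IsLocalClone (transClone H) := by
  refine ⟨isClone_transClone H, fun n => ?_⟩
  let : TopologicalSpace X := ⊥
  have : DiscreteTopology X := ⟨rfl⟩
  have hfrag : {f : (Fin (n + 1) → X) → X | (⟨n, f⟩ : FinOp X) ∈ transClone H} =
      {f | f 0 ∈ H} ∩ ⋃ k : Fin (n + 1), ⋂ x, {f | f x = f 0 + x k} := by
    ext f
    simp only [Set.mem_ofPred_eq, mem_transClone_iff_apply_zero, Set.mem_inter_iff,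
      Set.mem_iUnion, Set.mem_iInter]
  rw [hfrag]
  refine (isClosed_discrete _).preimage (continuous_apply 0) |>.inter <|
    isClosed_iUnion_of_finite fun k => isClosed_iInter fun x => ?_
  exact isClosed_eq (continuous_apply x)
    ((continuous_of_discreteTopology (f := (· + x k))).comp (continuous_apply 0))

theorem transClone_sInf {S : Set (AddSubgroup X)} (hS : S.Nonempty) :
    transClone (sInf S) = ⋂ H ∈ S, transClone H := by
  ext ⟨n, f⟩
  obtain ⟨H₀, hH₀⟩ := hS
  simp only [Set.mem_iInter, mem_transClone_iff_apply_zero, AddSubgroup.mem_sInf]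
  exact ⟨fun ⟨h0, hk⟩ H hH => ⟨h0 H hH, hk⟩, fun h => ⟨fun H hH => (h H hH).1, (h H₀ hH₀).2⟩⟩

theorem transClone_sSup (S : Set (AddSubgroup X)) :
    transClone (sSup S) = cllClosure (⋃ H ∈ S, transClone H) := by
  set U := ⋃ H ∈ S, transClone H
  have hU : IsClone (cllClosure U) := (isLocalClone_cllClosure U).1
  refine Set.Subset.antisymm ?_ <| cllClosure_subset (isLocalClone_transClone _) <|
    Set.iUnion₂_subset fun H hH => transClone_mono (le_sSup hH)
  rintro ⟨n, f⟩ hf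
  obtain ⟨a, ha, k, rfl⟩ := mem_transClone_iff.1 hf
  rw [sSup_eq_iSup'] at ha
  refine hU.translation_mem ?_ n k
  refine AddSubgroup.iSup_induction
    (C := fun b => (⟨0, fun x => b + x 0⟩ : FinOp X) ∈ cllClosure U) _ ha
    (fun H b hb => ?_) ?_ fun _ _ => hU.translation_add_mem
  · exact subset_cllClosure U <|
      Set.mem_biUnion H.2 ((translation_mem_transClone_iff (0 : Fin 1)).2 hb)
  · simpa only [zero_add] using hU.1 0 0

end TransClone

theorem transClone_embedding_general (X : Type) [AddGroup X] :
    (∀ H : AddSubgroup X, IsLocalClone (transClone H)) ∧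
    (∀ H : AddSubgroup X,
      {g : (Fin 1 → X) → X | (⟨0, g⟩ : FinOp X) ∈ transClone H} =
        {g : (Fin 1 → X) → X | ∃ a ∈ H, g = fun x => a + x 0}) ∧
    Function.Injective (transClone (X := X)) ∧
    (∀ H K : AddSubgroup X, H ≤ K → transClone H ⊆ transClone K) ∧
    (∀ S : Set (AddSubgroup X), S.Nonempty →
      transClone (sInf S) = ⋂ H ∈ S, transClone H ∧
      transClone (sSup S) = cllClosure (⋃ H ∈ S, transClone H)) := by
  refine ⟨isLocalClone_transClone, fun H => ?_, transClone_injective,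
    fun _ _ => (transClone_mono ·), fun S hS => ⟨transClone_sInf hS, transClone_sSup S⟩⟩
  ext g
  simp only [Set.mem_ofPred_eq, mem_transClone_iff]
  exact exists_congr fun a =>
    and_congr_right fun _ => Fin.exists_fin_one (p := fun k => g = fun x => a + x k)

/-- For a group `(X,+)` on the countably infinite set `X`: every `C_H` is a
local clone, the unary part of `C_H` consists exactly of the translations by elements of `H`,
and `H ↦ C_H` is injective, order-preserving, and preserves arbitrary (nonempty) meets and
joins (meets of local clones being intersections and joins being generated local clones). -/
theorem transClone_embedding (X : Type) [Countable X] [Infinite X] [AddGroup X] :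
    (∀ H : AddSubgroup X, IsLocalClone (transClone H)) ∧
    (∀ H : AddSubgroup X,
      {g : (Fin 1 → X) → X | (⟨0, g⟩ : FinOp X) ∈ transClone H} =
        {g : (Fin 1 → X) → X | ∃ a ∈ H, g = fun x => a + x 0}) ∧
    Function.Injective (transClone (X := X)) ∧
    (∀ H K : AddSubgroup X, H ≤ K → transClone H ⊆ transClone K) ∧
    (∀ S : Set (AddSubgroup X), S.Nonempty →
      transClone (sInf S) = ⋂ H ∈ S, transClone H ∧
      transClone (sSup S) = cllClosure (⋃ H ∈ S, transClone H)) :=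
  transClone_embedding_general X
end

section
/- The lattice Cll(X) of local clones on a countably infinite set X is not embeddable as a lattice into any algebraic lattice with at most countably many compact elements; i.e., for no algebraic lattice L with countably many compact elements is there an injective map from Cll(X) to L preserving binary meets and joins. -/
variable {X : Type}

/-!
A unary operation `u` generates the clone of all `v ↦ u^[m] (v k)`; when `u` has a point `a`
whose orbit `m ↦ u^[m] a` is injective, the sets of `n`-ary members are locally finite unions
of finite sets (the value at the constant tuple `a` pins down `m`), so this clone is local.
Appending the bits of `x : ℕ → Bool` to lists, and transporting along `List Bool ↪ X`, gives
continuum many such `u_x` whose positive powers are pairwise distinct; their local clones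
pairwise intersect in the projection clone.

A meet-preserving injection `σ` would give continuum many distinct `σ (C_x)` with pairwise
meets `σ (projClone X)`. In an algebraic lattice, each `σ (C_x) ≰ σ (projClone X)` is witnessed
by a compact element below it, and distinct indices get distinct witnesses since two of them
lie below the meet. So only countably many indices exist, a contradiction.
-/

open Function Set

theorem countable_of_injective_of_pairwise_inf_eq {L : Type*} [CompleteLattice L]
    [IsCompactlyGenerated L] (hcnt : {c : L | IsCompactElement c}.Countable)
    {ι : Type*} {a : ι → L} (ha : Injective a) {b : L}
    (hab : Pairwise fun i j => a i ⊓ a j = b) : Countable ι := by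
  have hbelow : {i | a i ≤ b}.Subsingleton := by
    intro i hi j hj
    by_contra hij
    refine hij (ha (le_antisymm ?_ ?_))
    · exact hi.trans ((hab hij).symm.trans_le inf_le_right)
    · exact hj.trans ((hab hij).symm.trans_le inf_le_left)
  have hwitness : ∀ i ∈ {i | ¬ a i ≤ b}, ∃ c, IsCompactElement c ∧ c ≤ a i ∧ ¬ c ≤ b := by
    intro i hi
    simpa [le_iff_compact_le_imp (a := a i)] using hi
  choose! c hc using hwitness
  have habove : {i | ¬ a i ≤ b}.Countable := by
    refine MapsTo.countable_of_injOn (fun i hi => (hc i hi).1) (fun i hi j hj hcij => ?_) hcnt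
    by_contra hij
    exact (hc i hi).2.2 (hab hij ▸ le_inf (hc i hi).2.1 (hcij ▸ (hc j hj).2.1))
  rw [← countable_univ_iff]
  exact (habove.union hbelow.countable).mono fun i _ => by by_cases h : a i ≤ b <;> simp [h]

def iterateClone (u : X → X) : Set (FinOp X) :=
  {f | ∃ (m : ℕ) (k : Fin (f.1 + 1)), f.2 = fun v => u^[m] (v k)}

theorem iterateClone_isClone (u : X → X) : IsClone (iterateClone u) := by
  refine ⟨fun n k => ⟨0, k, rfl⟩, ?_⟩
  rintro n m f g ⟨p, k, hf⟩ hg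
  obtain ⟨q, j, hgk⟩ := hg k
  dsimp only at hf hgk
  exact ⟨p + q, j, funext fun v => by simp [hf, congrFun hgk v, iterate_add_apply]⟩

theorem isClosed_iterateClone_arity [TopologicalSpace X] [DiscreteTopology X] {u : X → X}
    {a : X} (hu : Injective fun m => u^[m] a) (n : ℕ) :
    IsClosed {f : (Fin (n + 1) → X) → X | (⟨n, f⟩ : FinOp X) ∈ iterateClone u} := by
  have hunion : {f : (Fin (n + 1) → X) → X | (⟨n, f⟩ : FinOp X) ∈ iterateClone u} =
      ⋃ m, range fun k (v : Fin (n + 1) → X) => u^[m] (v k) := by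
    ext f
    simp [iterateClone, eq_comm]
  rw [hunion]
  refine LocallyFinite.isClosed_iUnion (fun f => ?_) fun m => (finite_range _).isClosed
  refine ⟨(fun g => g fun _ => a) ⁻¹' {f fun _ => a},
    ((isOpen_discrete _).preimage (continuous_apply _)).mem_nhds rfl, ?_⟩
  refine Subsingleton.finite ?_
  rintro m ⟨_, ⟨k, rfl⟩, hm⟩ m' ⟨_, ⟨k', rfl⟩, hm'⟩
  exact hu (hm.trans hm'.symm)

theorem iterateClone_isLocalClone {u : X → X} {a : X} (hu : Injective fun m => u^[m] a) :
    IsLocalClone (iterateClone u) :=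
  letI : TopologicalSpace X := ⊥
  haveI : DiscreteTopology X := ⟨rfl⟩
  ⟨iterateClone_isClone u, fun n => isClosed_iterateClone_arity hu n⟩

theorem projClone_subset_iterateClone (u : X → X) : projClone X ⊆ iterateClone u :=
  fun _ ⟨k, hk⟩ => ⟨0, k, hk⟩

theorem iterateClone_inter_iterateClone {u v : X → X}
    (huv : ∀ m m', 0 < m → 0 < m' → u^[m] ≠ v^[m']) :
    iterateClone u ∩ iterateClone v = projClone X := by
  refine Subset.antisymm ?_
    (subset_inter (projClone_subset_iterateClone u) (projClone_subset_iterateClone v))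
  rintro ⟨n, f⟩ ⟨⟨m, k, hu⟩, m', k', hv⟩
  dsimp only at hu hv
  rcases m.eq_zero_or_pos with rfl | hm
  · exact ⟨k, hu⟩
  rcases m'.eq_zero_or_pos with rfl | hm'
  · exact ⟨k', hv⟩
  exact absurd (funext fun x => by simpa [hu] using congrFun hv fun _ => x) (huv m m' hm hm')

theorem unary_mem_iterateClone_iff {u w : X → X} :
    (⟨0, fun v => w (v 0)⟩ : FinOp X) ∈ iterateClone u ↔ ∃ m, w = u^[m] := by
  refine ⟨fun ⟨m, k, h⟩ => ⟨m, funext fun x => ?_⟩, fun ⟨m, h⟩ => ⟨m, 0, h ▸ rfl⟩⟩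
  simpa [Fin.fin_one_eq_zero k] using congrFun h fun _ => x

theorem injective_iterateClone {ι : Type*} {u : ι → X → X}
    (hpow : ∀ i j m m', 0 < m → 0 < m' → (u i)^[m] = (u j)^[m'] → i = j)
    (hid : ∀ i, u i ≠ id) : Injective fun i => iterateClone (u i) := by
  intro i j hij
  have hmem : (⟨0, fun v => u i (v 0)⟩ : FinOp X) ∈ iterateClone (u i) :=
    unary_mem_iterateClone_iff.2 ⟨1, rfl⟩
  obtain ⟨m, hm⟩ := unary_mem_iterateClone_iff.1 ((congrArg (_ ∈ ·) hij).mp hmem)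
  rcases m.eq_zero_or_pos with rfl | hm0
  · exact absurd hm (hid i)
  · exact hpow i j 1 m one_pos hm0 hm

def appendBit (x : ℕ → Bool) (l : List Bool) : List Bool :=
  l ++ [x l.length]

theorem iterate_appendBit (x : ℕ → Bool) (m : ℕ) (l : List Bool) :
    (appendBit x)^[m] l = l ++ (List.range' l.length m).map x := by
  induction m with
  | zero => simp
  | succ m ih => simp [iterate_succ_apply', ih, appendBit, List.range'_concat]

theorem length_iterate_appendBit (x : ℕ → Bool) (m : ℕ) (l : List Bool) :
    ((appendBit x)^[m] l).length = l.length + m := by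
  simp [iterate_appendBit]

theorem eq_of_iterate_appendBit_eq {x y : ℕ → Bool} {m m' : ℕ} (hm : 0 < m) (hm' : 0 < m')
    (h : (appendBit x)^[m] = (appendBit y)^[m']) : x = y := by
  obtain ⟨m, rfl⟩ := Nat.exists_eq_add_of_lt hm
  obtain ⟨m', rfl⟩ := Nat.exists_eq_add_of_lt hm'
  funext n
  have hn := congrFun h (List.replicate n false)
  simp only [zero_add, iterate_appendBit, List.length_replicate, List.range'_succ, List.map_cons,
    List.append_cancel_left_eq, List.cons.injEq] at hn
  exact hn.1

theorem Function.Injective.iterate_extend_apply {α β : Type*} {e : α → β} (he : Injective e)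
    (f : α → α) (m : ℕ) (a : α) : (extend e (e ∘ f) id)^[m] (e a) = e (f^[m] a) :=
  ((Semiconj.iterate_right (fun a => (he.extend_apply (e ∘ f) id a).symm) m) a).symm

theorem exists_iterate_independent_family (X : Type) [Infinite X] :
    ∃ u : (ℕ → Bool) → X → X,
      (∀ x y m m', 0 < m → 0 < m' → (u x)^[m] = (u y)^[m'] → x = y) ∧
      ∃ a, ∀ x, Injective fun m => (u x)^[m] a := by
  let e : List Bool → X := Infinite.natEmbedding X ∘ Encodable.encode
  have he : Injective e := (Infinite.natEmbedding X).injective.comp Encodable.encode_injective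
  refine ⟨fun x => extend e (e ∘ appendBit x) id, fun x y m m' hm hm' h => ?_, e [], fun x => ?_⟩
  · refine eq_of_iterate_appendBit_eq hm hm' (funext fun l => he ?_)
    rw [← he.iterate_extend_apply, ← he.iterate_extend_apply, h]
  · intro m m' h
    have hlen := congrArg List.length (he (by simpa only [he.iterate_extend_apply] using h))
    simpa [length_iterate_appendBit] using hlen

theorem not_countable_nat_to_bool : ¬ Countable (ℕ → Bool) := by
  intro h
  have h1 := Cardinal.mk_le_aleph0_iff.2 h
  simp only [Cardinal.mk_pi, Cardinal.mk_bool, Cardinal.prod_const, Cardinal.lift_ofNat,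
    Cardinal.mk_nat, Cardinal.lift_aleph0] at h1
  exact (Cardinal.cantor _).not_ge h1

theorem no_embedding_into_countably_algebraic_general (X : Type) [Infinite X]
    (L : Type) [CompleteLattice L] [IsCompactlyGenerated L]
    (hcnt : {a : L | IsCompactElement a}.Countable) :
    ¬ ∃ σ : Set (FinOp X) → L,
        Set.InjOn σ {C : Set (FinOp X) | IsLocalClone C} ∧
        (∀ C D : Set (FinOp X), IsLocalClone C → IsLocalClone D →
          σ (C ∩ D) = σ C ⊓ σ D ∧ σ (cllClosure (C ∪ D)) = σ C ⊔ σ D) := by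
  rintro ⟨σ, hinj, hlat⟩
  obtain ⟨u, hpow, a, horbit⟩ := exists_iterate_independent_family X
  have hloc x : IsLocalClone (iterateClone (u x)) := iterateClone_isLocalClone (horbit x)
  have hid x : u x ≠ id := fun h => by simpa [h] using (horbit x).ne one_ne_zero
  refine not_countable_nat_to_bool (countable_of_injective_of_pairwise_inf_eq hcnt
    (a := fun x => σ (iterateClone (u x))) (b := σ (projClone X)) ?_ fun x y hxy => ?_)
  · exact fun x y h => injective_iterateClone hpow hid (hinj (hloc x) (hloc y) h)
  · dsimp only
    rw [← (hlat _ _ (hloc x) (hloc y)).1, iterateClone_inter_iterateClone]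
    exact fun m m' hm hm' h => hxy (hpow x y m m' hm hm' h)

/-- The lattice of local clones on a countably infinite set `X` does not embed
as a lattice into any algebraic lattice with at most countably many compact elements: there is
no injective map from the local clones on `X` into such a lattice preserving binary meets
(intersections of local clones) and binary joins (generated local clones of unions). -/
theorem no_embedding_into_countably_algebraic (X : Type) [Countable X] [Infinite X]
    (L : Type) [CompleteLattice L] [IsCompactlyGenerated L]
    (hcnt : {a : L | IsCompactElement a}.Countable) :
    ¬ ∃ σ : Set (FinOp X) → L,
        Set.InjOn σ {C : Set (FinOp X) | IsLocalClone C} ∧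
        (∀ C D : Set (FinOp X), IsLocalClone C → IsLocalClone D →
          σ (C ∩ D) = σ C ⊓ σ D ∧ σ (cllClosure (C ∪ D)) = σ C ⊔ σ D) :=
  no_embedding_into_countably_algebraic_general X L hcnt
end
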